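/- Let X be a real Banach space with dual X*, let F : X → X* be Fréchet differentiable, and let û ∈ X be given with F'_{û} invertible. Suppose there exists α > 0 with ‖F'^{-1}_{û} F(û)‖_X ≤ α, and there exist δ > 0 and β > 0 such that ‖F'^{-1}_{û}(F'_v − F'_w)‖_{𝓛(X,X)} ≤ β ‖v − w‖_X for all v, w in the open ball D = B(û, 2α + δ). If αβ ≤ 1/2, then there exists a solution u ∈ X of F(u) = 0 in the closed ball B̄(û, ρ) with ρ = (1 − √(1 − 2αβ))/β; moreover, this solution is unique in the closed ball B̄(û, 2α). -/

import Mathlib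

/-!
The zeros of `F` are the fixed points of the simplified Newton map `Φ x = x - G (F x)`, whose
derivative `G ∘ (F' û - F' x)` has norm at most `β ‖x - û‖`; integrating along segments gives
`‖Φ v - Φ w‖ ≤ β / 2 (‖v - û‖ + ‖w - û‖) ‖v - w‖`. Kantorovich's scalar majorant
`t₀ = 0, tₙ₊₁ = α + β / 2 tₙ²` increases to the smaller root `ρ` of `β / 2 t² - t + α` and
dominates the steps of the iteration `Φⁿ û`, which therefore converges to a fixed point `u` in
`B̄(û, ρ)`. Another fixed point `u'` in `B̄(û, 2α)` satisfies `‖u' - Φⁿ û‖ ≤ 2α - tₙ`, hence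
`‖u' - u‖ ≤ 2α - ρ`: this vanishes when `αβ = 1/2`, and otherwise the estimate above makes `Φ`
a strict contraction between `u` and `u'`.
-/

open Metric Set Filter Topology Function

theorem norm_image_sub_le_of_norm_hasFDerivAt_le_mul_norm_sub
    {E F : Type*} [NormedAddCommGroup E] [NormedSpace ℝ E]
    [NormedAddCommGroup F] [NormedSpace ℝ F]
    {f : E → F} {f' : E → E →L[ℝ] F} {c : E} {R β : ℝ} (hβ : 0 ≤ β)
    (hf : ∀ x ∈ closedBall c R, HasFDerivAt f (f' x) x)
    (hf' : ∀ x ∈ closedBall c R, ‖f' x‖ ≤ β * ‖x - c‖)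
    {v w : E} (hv : v ∈ closedBall c R) (hw : w ∈ closedBall c R) :
    ‖f v - f w‖ ≤ β / 2 * (‖v - c‖ + ‖w - c‖) * ‖v - w‖ := by
  set a := ‖v - c‖
  set b := ‖w - c‖
  set γ : ℝ → E := fun t => w + t • (v - w)
  have hγ_mem : ∀ t ∈ Icc (0 : ℝ) 1, γ t ∈ closedBall c R := fun t ht =>
    (convex_closedBall c R).add_smul_sub_mem hw hv ht
  have hγ_dist : ∀ t ∈ Icc (0 : ℝ) 1, ‖γ t - c‖ ≤ (1 - t) * b + t * a := by
    intro t ⟨ht₀, ht₁⟩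
    calc ‖γ t - c‖ = ‖(1 - t) • (w - c) + t • (v - c)‖ := by congr 1; module
      _ ≤ (1 - t) * b + t * a := by
        refine (norm_add_le _ _).trans_eq ?_
        rw [norm_smul, norm_smul, Real.norm_of_nonneg (by linarith), Real.norm_of_nonneg ht₀]
  have hγ : ∀ t ∈ Icc (0 : ℝ) 1, HasDerivAt (fun t => f (γ t)) (f' (γ t) (v - w)) t := by
    intro t ht
    refine (hf _ (hγ_mem t ht)).comp_hasDerivAt t ?_
    simpa [γ] using ((hasDerivAt_id t).smul_const (v - w)).const_add w
  -- `B` integrates the bound `β ‖v - w‖ ((1 - t) b + t a)` on the derivative along the segment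
  set B : ℝ → ℝ := fun t => β * ‖v - w‖ * (b * t + (a - b) * (t ^ 2 / 2))
  have hB : ∀ t, HasDerivAt B (β * ‖v - w‖ * ((1 - t) * b + t * a)) t := by
    intro t
    exact ((((hasDerivAt_id t).const_mul b).add
      (((hasDerivAt_pow 2 t).div_const 2).const_mul (a - b))).const_mul (β * ‖v - w‖)).congr_deriv
      (by simp only [Nat.cast_ofNat]; ring)
  have key := image_norm_le_of_norm_deriv_right_le_deriv_boundary (a := 0) (b := 1)
    (f := fun t => f (γ t) - f w) (B := B)
    (fun t ht => ((hγ t ht).continuousAt.sub continuousAt_const).continuousWithinAt)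
    (fun t ht => ((hγ t (Ico_subset_Icc_self ht)).sub_const _).hasDerivWithinAt)
    (by simp [γ, B]) hB
    (fun t ht => by
      have ht' := Ico_subset_Icc_self ht
      calc ‖f' (γ t) (v - w)‖ ≤ ‖f' (γ t)‖ * ‖v - w‖ := (f' (γ t)).le_opNorm _
        _ ≤ β * ((1 - t) * b + t * a) * ‖v - w‖ := by
          gcongr
          exact (hf' _ (hγ_mem t ht')).trans (by gcongr; exact hγ_dist t ht')
        _ = β * ‖v - w‖ * ((1 - t) * b + t * a) := by ring)
    (right_mem_Icc.2 zero_le_one)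
  calc ‖f v - f w‖ ≤ B 1 := by simpa [γ] using key
    _ = β / 2 * (a + b) * ‖v - w‖ := by simp only [B]; ring

noncomputable def kantorovichSeq (α β : ℝ) : ℕ → ℝ
  | 0 => 0
  | n + 1 => α + β / 2 * kantorovichSeq α β n ^ 2

noncomputable def kantorovichRadius (α β : ℝ) : ℝ := (1 - √(1 - 2 * α * β)) / β

namespace kantorovichSeq

variable {α β : ℝ}

@[simp] theorem zero : kantorovichSeq α β 0 = 0 := rfl

theorem succ (n : ℕ) : kantorovichSeq α β (n + 1) = α + β / 2 * kantorovichSeq α β n ^ 2 := rfl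

end kantorovichSeq

section Majorant

variable {α β : ℝ}

theorem kantorovichRadius_le_of_root (hβ : 0 < β) (hαβ : α * β ≤ 1 / 2) {t : ℝ}
    (ht : α + β / 2 * t ^ 2 = t) : kantorovichRadius α β ≤ t := by
  set s := √(1 - 2 * α * β)
  have hs : s ^ 2 = 1 - 2 * α * β := Real.sq_sqrt (by linarith)
  rw [kantorovichRadius, div_le_iff₀ hβ]
  nlinarith [Real.sqrt_nonneg (1 - 2 * α * β), sq_nonneg (β * t - 1 + s), sq_abs (β * t - 1)]

theorem kantorovichRadius_root (hβ : 0 < β) (hαβ : α * β ≤ 1 / 2) :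
    α + β / 2 * kantorovichRadius α β ^ 2 = kantorovichRadius α β := by
  have hs : √(1 - 2 * α * β) ^ 2 = 1 - 2 * α * β := Real.sq_sqrt (by linarith)
  rw [kantorovichRadius]
  generalize √(1 - 2 * α * β) = s at hs
  field_simp
  linear_combination hs

theorem kantorovichRadius_le_two_mul (hα : 0 ≤ α) (hβ : 0 < β) (hαβ : α * β ≤ 1 / 2) :
    kantorovichRadius α β ≤ 2 * α := by
  set s := √(1 - 2 * α * β)
  have hs : s ^ 2 = 1 - 2 * α * β := Real.sq_sqrt (by linarith)
  have hs1 : s ≤ 1 := Real.sqrt_le_one.mpr (by nlinarith)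
  rw [kantorovichRadius, div_le_iff₀ hβ]
  nlinarith [Real.sqrt_nonneg (1 - 2 * α * β)]

theorem div_two_mul_two_mul_add_kantorovichRadius_lt_one (hβ : 0 < β) (hαβ : α * β ≤ 1 / 2)
    (h : kantorovichRadius α β < 2 * α) : β / 2 * (2 * α + kantorovichRadius α β) < 1 := by
  have hs : √(1 - 2 * α * β) ^ 2 = 1 - 2 * α * β := Real.sq_sqrt (by linarith)
  have hρ : β * kantorovichRadius α β = 1 - √(1 - 2 * α * β) := mul_div_cancel₀ _ hβ.ne'
  rw [kantorovichRadius, div_lt_iff₀ hβ] at h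
  nlinarith [Real.sqrt_nonneg (1 - 2 * α * β)]

theorem kantorovichSeq_nonneg (hα : 0 ≤ α) (hβ : 0 ≤ β) (n : ℕ) : 0 ≤ kantorovichSeq α β n := by
  cases n with
  | zero => rfl
  | succ n => rw [kantorovichSeq.succ]; positivity

theorem kantorovichRadius_nonneg (hα : 0 ≤ α) (hβ : 0 < β) : 0 ≤ kantorovichRadius α β :=
  div_nonneg (sub_nonneg.2 (Real.sqrt_le_one.2 (by nlinarith))) hβ.le

theorem kantorovichSeq_le_radius (hα : 0 ≤ α) (hβ : 0 < β) (hαβ : α * β ≤ 1 / 2) (n : ℕ) :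
    kantorovichSeq α β n ≤ kantorovichRadius α β := by
  induction n with
  | zero => exact kantorovichRadius_nonneg hα hβ
  | succ n ih =>
    rw [kantorovichSeq.succ, ← kantorovichRadius_root hβ hαβ]
    have := kantorovichSeq_nonneg hα hβ.le n
    gcongr

theorem kantorovichSeq_monotone (hα : 0 ≤ α) (hβ : 0 ≤ β) : Monotone (kantorovichSeq α β) := by
  refine monotone_nat_of_le_succ fun n => ?_
  induction n with
  | zero => exact kantorovichSeq_nonneg hα hβ 1
  | succ n ih =>
    rw [kantorovichSeq.succ n, kantorovichSeq.succ (n + 1)]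
    have := kantorovichSeq_nonneg hα hβ n
    gcongr

theorem kantorovichSeq_le_two_mul (hα : 0 ≤ α) (hβ : 0 < β) (hαβ : α * β ≤ 1 / 2) (n : ℕ) :
    kantorovichSeq α β n ≤ 2 * α :=
  (kantorovichSeq_le_radius hα hβ hαβ n).trans (kantorovichRadius_le_two_mul hα hβ hαβ)

theorem tendsto_kantorovichSeq (hα : 0 ≤ α) (hβ : 0 < β) (hαβ : α * β ≤ 1 / 2) :
    Tendsto (kantorovichSeq α β) atTop (𝓝 (kantorovichRadius α β)) := by
  obtain ⟨L, hL⟩ : ∃ L, Tendsto (kantorovichSeq α β) atTop (𝓝 L) :=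
    ⟨_, tendsto_atTop_ciSup (kantorovichSeq_monotone hα hβ.le)
      ⟨_, forall_mem_range.2 (kantorovichSeq_le_radius hα hβ hαβ)⟩⟩
  have hroot : α + β / 2 * L ^ 2 = L := tendsto_nhds_unique
    ((hL.pow 2).const_mul _ |>.const_add _) ((tendsto_add_atTop_iff_nat 1).2 hL)
  convert hL
  exact le_antisymm (kantorovichRadius_le_of_root hβ hαβ hroot)
    (le_of_tendsto' hL (kantorovichSeq_le_radius hα hβ hαβ))

end Majorant

section FixedPoint

variable {X : Type*} [NormedAddCommGroup X] {Φ : X → X} {c : X} {α β : ℝ}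

theorem norm_iterate_sub_le_kantorovichSeq (hβ : 0 < β) (hαβ : α * β ≤ 1 / 2)
    (hc : ‖Φ c - c‖ ≤ α)
    (hΦ : ∀ v ∈ closedBall c (2 * α), ∀ w ∈ closedBall c (2 * α),
      ‖Φ v - Φ w‖ ≤ β / 2 * (‖v - c‖ + ‖w - c‖) * ‖v - w‖) (n : ℕ) :
    ‖Φ^[n + 1] c - Φ^[n] c‖ ≤ kantorovichSeq α β (n + 1) - kantorovichSeq α β n ∧
      ‖Φ^[n] c - c‖ ≤ kantorovichSeq α β n := by
  have hα : 0 ≤ α := (norm_nonneg _).trans hc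
  have hmem {x : X} {m : ℕ} (hx : ‖x - c‖ ≤ kantorovichSeq α β m) : x ∈ closedBall c (2 * α) :=
    mem_closedBall_iff_norm.2 <| hx.trans (kantorovichSeq_le_two_mul hα hβ hαβ m)
  induction n with
  | zero => simpa [kantorovichSeq.succ] using hc
  | succ n ih =>
    obtain ⟨hstep, hdist⟩ := ih
    have hdist' : ‖Φ^[n + 1] c - c‖ ≤ kantorovichSeq α β (n + 1) :=
      (norm_sub_le_norm_sub_add_norm_sub _ (Φ^[n] c) _).trans (by linarith)
    refine ⟨?_, hdist'⟩
    have := kantorovichSeq_nonneg hα hβ.le n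
    have := kantorovichSeq_nonneg hα hβ.le (n + 1)
    calc ‖Φ^[n + 1 + 1] c - Φ^[n + 1] c‖ = ‖Φ (Φ^[n + 1] c) - Φ (Φ^[n] c)‖ := by
          rw [iterate_succ_apply', iterate_succ_apply']
      _ ≤ β / 2 * (‖Φ^[n + 1] c - c‖ + ‖Φ^[n] c - c‖) * ‖Φ^[n + 1] c - Φ^[n] c‖ :=
          hΦ _ (hmem hdist') _ (hmem hdist)
      _ ≤ β / 2 * (kantorovichSeq α β (n + 1) + kantorovichSeq α β n) *
            (kantorovichSeq α β (n + 1) - kantorovichSeq α β n) := by gcongr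
      _ = kantorovichSeq α β (n + 1 + 1) - kantorovichSeq α β (n + 1) := by
          rw [kantorovichSeq.succ (n + 1), kantorovichSeq.succ n]; ring

theorem norm_sub_iterate_le_of_isFixedPt (hβ : 0 < β) (hαβ : α * β ≤ 1 / 2)
    (hc : ‖Φ c - c‖ ≤ α)
    (hΦ : ∀ v ∈ closedBall c (2 * α), ∀ w ∈ closedBall c (2 * α),
      ‖Φ v - Φ w‖ ≤ β / 2 * (‖v - c‖ + ‖w - c‖) * ‖v - w‖)
    {u : X} (hu : IsFixedPt Φ u) (hu_mem : u ∈ closedBall c (2 * α)) (n : ℕ) :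
    ‖u - Φ^[n] c‖ ≤ 2 * α - kantorovichSeq α β n := by
  have hα : 0 ≤ α := (norm_nonneg _).trans hc
  induction n with
  | zero => simpa using mem_closedBall_iff_norm.1 hu_mem
  | succ n ih =>
    have hdist := (norm_iterate_sub_le_kantorovichSeq hβ hαβ hc hΦ n).2
    have := kantorovichSeq_nonneg hα hβ.le n
    calc ‖u - Φ^[n + 1] c‖ = ‖Φ u - Φ (Φ^[n] c)‖ := by rw [hu.eq, iterate_succ_apply']
      _ ≤ β / 2 * (‖u - c‖ + ‖Φ^[n] c - c‖) * ‖u - Φ^[n] c‖ := hΦ _ hu_mem _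
            (mem_closedBall_iff_norm.2 (hdist.trans (kantorovichSeq_le_two_mul hα hβ hαβ n)))
      _ ≤ β / 2 * (2 * α + kantorovichSeq α β n) * (2 * α - kantorovichSeq α β n) := by
          gcongr
          exact mem_closedBall_iff_norm.1 hu_mem
      _ ≤ 2 * α - kantorovichSeq α β (n + 1) := by
          rw [kantorovichSeq.succ]; nlinarith

theorem exists_isFixedPt_of_norm_sub_le_kantorovich [CompleteSpace X] (hβ : 0 < β)
    (hαβ : α * β ≤ 1 / 2) (hc : ‖Φ c - c‖ ≤ α)
    (hΦ : ∀ v ∈ closedBall c (2 * α), ∀ w ∈ closedBall c (2 * α),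
      ‖Φ v - Φ w‖ ≤ β / 2 * (‖v - c‖ + ‖w - c‖) * ‖v - w‖) (hΦc : Continuous Φ) :
    ∃ u ∈ closedBall c (kantorovichRadius α β), IsFixedPt Φ u ∧
      ∀ u' ∈ closedBall c (2 * α), IsFixedPt Φ u' → u' = u := by
  have hα : 0 ≤ α := (norm_nonneg _).trans hc
  have hbound := norm_iterate_sub_le_kantorovichSeq hβ hαβ hc hΦ
  have ht := tendsto_kantorovichSeq hα hβ hαβ
  have hcauchy : CauchySeq fun n => Φ^[n] c := by
    refine cauchySeq_of_dist_le_of_summable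
      (fun n => kantorovichSeq α β (n + 1) - kantorovichSeq α β n)
      (fun n => by rw [dist_comm, dist_eq_norm]; exact (hbound n).1) ?_
    refine summable_of_sum_range_le (c := kantorovichRadius α β)
      (fun n => sub_nonneg.2 (kantorovichSeq_monotone hα hβ.le n.le_succ)) fun n => ?_
    rw [Finset.sum_range_sub, kantorovichSeq.zero, sub_zero]
    exact kantorovichSeq_le_radius hα hβ hαβ n
  obtain ⟨u, hu⟩ := cauchySeq_tendsto_of_complete hcauchy
  have hu_mem : u ∈ closedBall c (kantorovichRadius α β) :=
    isClosed_closedBall.mem_of_tendsto hu <| Eventually.of_forall fun n =>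
      mem_closedBall_iff_norm.2 ((hbound n).2.trans (kantorovichSeq_le_radius hα hβ hαβ n))
  have hu_fixed : IsFixedPt Φ u := isFixedPt_of_tendsto_iterate hu hΦc.continuousAt
  refine ⟨u, hu_mem, hu_fixed, fun u' hu'_mem hu'_fixed => ?_⟩
  have hle : ‖u' - u‖ ≤ 2 * α - kantorovichRadius α β :=
    le_of_tendsto_of_tendsto' ((tendsto_const_nhds.sub hu).norm) (tendsto_const_nhds.sub ht)
      (norm_sub_iterate_le_of_isFixedPt hβ hαβ hc hΦ hu'_fixed hu'_mem)
  have hcontr : ‖u' - u‖ ≤ β / 2 * (2 * α + kantorovichRadius α β) * ‖u' - u‖ := by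
    calc ‖u' - u‖ = ‖Φ u' - Φ u‖ := by rw [hu'_fixed.eq, hu_fixed.eq]
      _ ≤ β / 2 * (‖u' - c‖ + ‖u - c‖) * ‖u' - u‖ :=
          hΦ _ hu'_mem _
            (closedBall_subset_closedBall (kantorovichRadius_le_two_mul hα hβ hαβ) hu_mem)
      _ ≤ _ := by
          gcongr
          · exact mem_closedBall_iff_norm.1 hu'_mem
          · exact mem_closedBall_iff_norm.1 hu_mem
  refine sub_eq_zero.1 (norm_le_zero_iff.1 ?_)
  rcases (kantorovichRadius_le_two_mul hα hβ hαβ).eq_or_lt with heq | hlt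
  · linarith
  · nlinarith [div_two_mul_two_mul_add_kantorovichRadius_lt_one hβ hαβ hlt, norm_nonneg (u' - u)]

end FixedPoint

theorem newton_kantorovich_general
    {X : Type*} [NormedAddCommGroup X] [NormedSpace ℝ X] [CompleteSpace X]
    (F : X → StrongDual ℝ X)
    (F' : X → X →L[ℝ] StrongDual ℝ X)
    (hF : ∀ x, HasFDerivAt F (F' x) x)
    (uhat : X)
    (G : StrongDual ℝ X →L[ℝ] X)
    (hG₁ : ∀ φ, F' uhat (G φ) = φ) (hG₂ : ∀ x, G (F' uhat x) = x)
    (α β δ : ℝ) (hβ : 0 < β) (hδ : 0 < δ)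
    (hα' : ‖G (F uhat)‖ ≤ α)
    (hβ' : ∀ v ∈ ball uhat (2 * α + δ), ∀ w ∈ ball uhat (2 * α + δ),
      ‖G.comp (F' v - F' w)‖ ≤ β * ‖v - w‖)
    (hαβ : α * β ≤ 1 / 2) :
    ∃ u ∈ closedBall uhat ((1 - Real.sqrt (1 - 2 * α * β)) / β),
      F u = 0 ∧ ∀ u' ∈ closedBall uhat (2 * α), F u' = 0 → u' = u := by
  set Φ : X → X := fun x => x - G (F x)
  have hΦ' (x : X) : HasFDerivAt Φ (G.comp (F' uhat - F' x)) x := by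
    refine ((hasFDerivAt_id x).sub (G.hasFDerivAt.comp x (hF x))).congr_fderiv ?_
    ext y
    simp [hG₂]
  have hΦ'_le : ∀ x ∈ closedBall uhat (2 * α), ‖G.comp (F' uhat - F' x)‖ ≤ β * ‖x - uhat‖ := by
    intro x hx
    have hα : 0 ≤ α := (norm_nonneg _).trans hα'
    have hball : closedBall uhat (2 * α) ⊆ ball uhat (2 * α + δ) :=
      closedBall_subset_ball (by linarith)
    simpa only [norm_sub_rev uhat x] using
      hβ' uhat (hball (mem_closedBall_self (by linarith))) x (hball hx)
  have hfixed (u : X) : IsFixedPt Φ u ↔ F u = 0 := by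
    refine ⟨fun h => ?_, fun h => by simp [IsFixedPt, Φ, h]⟩
    rw [← hG₁ (F u), sub_eq_self.1 h, map_zero]
  obtain ⟨u, hu_mem, hu, huniq⟩ := exists_isFixedPt_of_norm_sub_le_kantorovich hβ hαβ
    (by simpa [Φ] using hα')
    (fun v hv w hw => norm_image_sub_le_of_norm_hasFDerivAt_le_mul_norm_sub hβ.le
      (fun x _ => hΦ' x) hΦ'_le hv hw)
    (continuous_id.sub (G.continuous.comp
      (continuous_iff_continuousAt.2 fun x => (hF x).continuousAt)))
  exact ⟨u, hu_mem, (hfixed u).1 hu, fun u' hu' hFu' => huniq u' hu' ((hfixed u').2 hFu')⟩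

/-- **Newton–Kantorovich theorem.**  Let `X` be a real Banach space with dual `X*`,
`F : X → X*` Fréchet differentiable, `û ∈ X` with `F'_{û}` invertible (with inverse `G`).
If `‖F'⁻¹_{û} F(û)‖ ≤ α`, and `‖F'⁻¹_{û}(F'_v − F'_w)‖ ≤ β ‖v − w‖` for all
`v, w` in the open ball `D = B(û, 2α + δ)`, and `αβ ≤ 1/2`, then there is a solution
`u` of `F(u) = 0` in the closed ball of radius `ρ = (1 − √(1 − 2αβ))/β` about `û`,
which is unique in the closed ball of radius `2α`. -/
theorem newton_kantorovich
    {X : Type*} [NormedAddCommGroup X] [NormedSpace ℝ X] [CompleteSpace X]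
    (F : X → StrongDual ℝ X)
    (F' : X → X →L[ℝ] StrongDual ℝ X)
    (hF : ∀ x, HasFDerivAt F (F' x) x)
    (uhat : X)
    (G : StrongDual ℝ X →L[ℝ] X)
    (hG₁ : ∀ φ, F' uhat (G φ) = φ) (hG₂ : ∀ x, G (F' uhat x) = x)
    (α β δ : ℝ) (hα : 0 < α) (hβ : 0 < β) (hδ : 0 < δ)
    (hα' : ‖G (F uhat)‖ ≤ α)
    (hβ' : ∀ v ∈ ball uhat (2 * α + δ), ∀ w ∈ ball uhat (2 * α + δ),
      ‖G.comp (F' v - F' w)‖ ≤ β * ‖v - w‖)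
    (hαβ : α * β ≤ 1 / 2) :
    ∃ u ∈ closedBall uhat ((1 - Real.sqrt (1 - 2 * α * β)) / β),
      F u = 0 ∧ ∀ u' ∈ closedBall uhat (2 * α), F u' = 0 → u' = u :=
  newton_kantorovich_general F F' hF uhat G hG₁ hG₂ α β δ hβ hδ hα' hβ' hαβ
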